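/- arXiv:1812.06840 — 4 statements merged into one kernel-verified Lean document; each statement's English description precedes it below -/
import Mathlib

section
/- Let n ∈ ℝ³ be a unit vector, μ ∈ ℝ, q ∈ ℝ, G ∈ ℝ³, and let A be a real 3×3 matrix such that A w = 0 for every vector w orthogonal to n and tr A = 0. If −q n + μ (A + Aᵀ) n = G, then μ A n = G − ⟨G, n⟩ n; that is, the jump in μ times the normal derivative of velocity equals the tangential projection (I − n nᵀ) G of the traction jump. -/
open Matrix

/-- The jump condition for the normal derivative of velocity in the immersed
interface method: under the traction jump balance `-q n + μ (A + Aᵀ) n = G`,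
with `A` annihilating tangent vectors and having zero trace,
`μ A n = G - ⟨G, n⟩ n`, the tangential projection of the traction jump. -/
theorem normal_derivative_jump_condition
    (n : Fin 3 → ℝ) (hn : n ⬝ᵥ n = 1)
    (μ q : ℝ) (G : Fin 3 → ℝ)
    (A : Matrix (Fin 3) (Fin 3) ℝ)
    (hA : ∀ w : Fin 3 → ℝ, w ⬝ᵥ n = 0 → A.mulVec w = 0)
    (htr : A.trace = 0)
    (heq : (-q) • n + μ • (A + Aᵀ).mulVec n = G) :
    μ • A.mulVec n = G - (G ⬝ᵥ n) • n := by
  set a := A.mulVec n with ha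
  have key : ∀ x : Fin 3 → ℝ, A.mulVec x = (x ⬝ᵥ n) • a := by
    intro x
    have h := hA (x - (x ⬝ᵥ n) • n) (by
      simp [sub_dotProduct, smul_dotProduct, hn])
    rw [Matrix.mulVec_sub, Matrix.mulVec_smul, sub_eq_zero] at h
    exact h
  have hAij : ∀ i j, A i j = n j * a i := by
    intro i j
    have h := congrFun (key (Pi.single j 1)) i
    simpa [Matrix.mulVec_single, mul_comm] using h
  have han : a ⬝ᵥ n = 0 := by
    have h : A.trace = a ⬝ᵥ n := by
      simp [Matrix.trace, Matrix.diag, dotProduct, hAij, mul_comm]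
    rw [← h, htr]
  have hAT : Aᵀ.mulVec n = 0 := by
    funext i
    have : ∑ j, A j i * n j = n i * ∑ j, a j * n j := by
      rw [Finset.mul_sum]
      refine Finset.sum_congr rfl fun j _ => ?_
      rw [hAij]; ring
    simp [Matrix.mulVec, dotProduct, Matrix.transpose_apply, this,
      show ∑ j, a j * n j = 0 from han]
  have hG : G = (-q) • n + μ • a := by
    rw [← heq, Matrix.add_mulVec, hAT, ← ha, add_zero]
  have hGn : G ⬝ᵥ n = -q := by
    rw [hG]
    simp [add_dotProduct, smul_dotProduct, hn, han]
  rw [hGn, hG]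
  ext i
  simp [Pi.smul_apply, Pi.add_apply, Pi.sub_apply]
end

section
/- Let n = (n¹, n², n³) ∈ ℝ³ be a unit vector, μ ∈ ℝ, q ∈ ℝ, G ∈ ℝ³, and let A be a real 3×3 matrix such that A w = 0 for every vector w orthogonal to n and tr A = 0. If −q n + μ (A + Aᵀ) n = G, then for each standard basis vector e_j (j = 1, 2, 3), μ A e_j = n^j (G − ⟨G, n⟩ n); equivalently μ A = ((I − n nᵀ) G) nᵀ. In particular the jump in μ ∂u/∂x_j equals (I − n ⊗ n) G multiplied by the j-th component of n. -/
open Matrix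

/-- The Cartesian velocity-gradient jump conditions of the immersed interface
method: under the traction jump balance `-q n + μ (A + Aᵀ) n = G`, with `A`
annihilating tangent vectors and having zero trace, each column of `μ A`
satisfies `μ A e_j = n^j (G - ⟨G, n⟩ n)`; equivalently
`μ A = ((I - n nᵀ) G) nᵀ`. -/
theorem cartesian_gradient_jump_conditions
    (n : Fin 3 → ℝ) (hn : n ⬝ᵥ n = 1)
    (μ q : ℝ) (G : Fin 3 → ℝ)
    (A : Matrix (Fin 3) (Fin 3) ℝ)
    (hA : ∀ w : Fin 3 → ℝ, w ⬝ᵥ n = 0 → A.mulVec w = 0)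
    (htr : A.trace = 0)
    (heq : (-q) • n + μ • (A + Aᵀ).mulVec n = G) :
    (∀ j : Fin 3, μ • A.mulVec (Pi.single j 1) = (n j) • (G - (G ⬝ᵥ n) • n)) ∧
      μ • A = Matrix.vecMulVec (G - (G ⬝ᵥ n) • n) n := by
  set a := A.mulVec n with ha
  have key : ∀ w : Fin 3 → ℝ, A.mulVec w = (w ⬝ᵥ n) • a := by
    intro w
    have ht : (w - (w ⬝ᵥ n) • n) ⬝ᵥ n = 0 := by
      simp [sub_dotProduct, smul_dotProduct, hn]
    have h0 := hA _ ht
    rw [Matrix.mulVec_sub, Matrix.mulVec_smul, sub_eq_zero] at h0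
    exact h0
  have hent : ∀ i j, A i j = n j * a i := by
    intro i j
    have h := congrFun (key (Pi.single j 1)) i
    simpa [Matrix.mulVec, dotProduct, Pi.single_apply, Finset.sum_ite_eq',
      mul_comm] using h
  have han : a ⬝ᵥ n = 0 := by
    have h : A.trace = a ⬝ᵥ n := by
      simp [Matrix.trace, Matrix.diag, dotProduct, hent, mul_comm]
    rw [← h, htr]
  have hAT : Aᵀ.mulVec n = 0 := by
    funext i
    simp only [Matrix.mulVec, dotProduct, Matrix.transpose_apply, Pi.zero_apply]
    have : ∀ j, A j i * n j = n i * (a j * n j) := by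
      intro j; rw [hent j i]; ring
    rw [Finset.sum_congr rfl fun j _ => this j, ← Finset.mul_sum]
    have : (∑ j, a j * n j) = a ⬝ᵥ n := rfl
    rw [this, han, mul_zero]
  have hAn : A.mulVec n = a := rfl
  have heq' : (-q) • n + μ • a = G := by
    rw [Matrix.add_mulVec, hAT, hAn, add_zero] at heq
    exact heq
  have hq : -q = G ⬝ᵥ n := by
    have h := congrArg (fun v => v ⬝ᵥ n) heq'
    simpa [add_dotProduct, smul_dotProduct, hn, han] using h
  have hma : μ • a = G - (G ⬝ᵥ n) • n := by
    have := heq'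
    rw [hq] at this
    linear_combination (norm := (funext i; simp; ring_nf)) this
  constructor
  · intro j
    rw [key (Pi.single j 1)]
    have hdp : Pi.single j 1 ⬝ᵥ n = n j := by
      simp [dotProduct, Pi.single_apply, Finset.sum_ite_eq']
    rw [hdp, smul_comm, hma]
  · funext i j
    simp only [Matrix.smul_apply, Matrix.vecMulVec_apply, smul_eq_mul]
    rw [hent i j]
    have := congrFun hma i
    simp only [Pi.smul_apply, smul_eq_mul, Pi.sub_apply] at this
    rw [← mul_assoc, mul_comm μ (n j), mul_assoc, this]
    simp only [Pi.sub_apply, Pi.smul_apply, smul_eq_mul]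
    ring
end

section
/- Let h > 0, let x_i ∈ ℝ, x_{i+1} = x_i + h, and let x∘ ∈ (x_i, x_{i+1}). Let ψ⁻ and ψ⁺ be three-times continuously differentiable real functions on an open interval containing [x_i, x_{i+1}], and let M⁻ and M⁺ bound |(ψ⁻)'''| and |(ψ⁺)'''| on [x_i, x_{i+1}]. Define the jump values J_m = (ψ⁺)^{(m)}(x∘) − (ψ⁻)^{(m)}(x∘) for m = 0, 1, 2, and set d⁺ = x_{i+1} − x∘. Then | (ψ⁻)'((x_i + x_{i+1})/2) − (1/h) ( ψ⁺(x_{i+1}) − ψ⁻(x_i) − Σ_{m=0}^{2} (d⁺)^m J_m / m! ) | ≤ (M⁻/24 + (M⁺ + M⁻)/6) h². -/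
/-!
Expanding `ψ⁺` and `ψ⁻` to second order about `x∘` and evaluating at `x_{i+1}` shows that the
jump-corrected value `ψ⁺(x_{i+1}) - Σ (d⁺)^m J_m / m!` equals `ψ⁻(x_{i+1})` up to
`(M⁺ + M⁻) h³ / 6`. What remains is the central difference quotient of `ψ⁻` alone, whose error at
the midpoint is `M⁻ h² / 24` because the second-order Taylor terms about the midpoint cancel.
-/

open Set Finset Nat

theorem abs_sub_sum_taylor_le {f : ℝ → ℝ} {U : Set ℝ} (hU : IsOpen U) {n : ℕ}
    (hf : ContDiffOn ℝ (n + 1) f U) {c d M : ℝ} (hcd : uIcc c d ⊆ U)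
    (hM : ∀ y ∈ uIcc c d, |iteratedDeriv (n + 1) f y| ≤ M) :
    |f d - ∑ k ∈ range (n + 1), (d - c) ^ k * iteratedDeriv k f c / k !| ≤
      M * |d - c| ^ (n + 1) / (n + 1)! := by
  rcases eq_or_ne c d with rfl | hne
  · simp [Finset.sum_range_succ']
  obtain ⟨x', hx', hrem⟩ := taylor_mean_remainder_lagrange_iteratedDeriv hne (hf.mono hcd)
  have hf_c : ContDiffAt ℝ (n + 1) f c := hf.contDiffAt (hU.mem_nhds (hcd left_mem_uIcc))
  have hpoly : taylorWithinEval f n (uIcc c d) c d =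
      ∑ k ∈ range (n + 1), (d - c) ^ k * iteratedDeriv k f c / k ! := by
    rw [taylor_within_apply]
    refine Finset.sum_congr rfl fun k hk => ?_
    have hk : (k : WithTop ℕ∞) ≤ n + 1 := by
      norm_cast; exact (Finset.mem_range.1 hk).le
    rw [iteratedDerivWithin_eq_iteratedDeriv (uniqueDiffOn_uIcc hne) (hf_c.of_le hk)
      left_mem_uIcc, smul_eq_mul]
    ring
  rw [← hpoly, hrem, abs_div, abs_mul, abs_pow, Nat.abs_cast]
  gcongr
  exact hM x' (uIoo_subset_uIcc_self hx')

theorem abs_sub_sub_sum_taylor_jump_le {f g : ℝ → ℝ} {U : Set ℝ} (hU : IsOpen U) {n : ℕ}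
    (hf : ContDiffOn ℝ (n + 1) f U) (hg : ContDiffOn ℝ (n + 1) g U) {c d M N : ℝ}
    (hcd : uIcc c d ⊆ U) (hM : ∀ y ∈ uIcc c d, |iteratedDeriv (n + 1) f y| ≤ M)
    (hN : ∀ y ∈ uIcc c d, |iteratedDeriv (n + 1) g y| ≤ N) :
    |g d - f d - ∑ k ∈ range (n + 1),
        (d - c) ^ k * (iteratedDeriv k g c - iteratedDeriv k f c) / k !| ≤
      (N + M) * |d - c| ^ (n + 1) / (n + 1)! := by
  have hsplit : g d - f d - ∑ k ∈ range (n + 1),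
        (d - c) ^ k * (iteratedDeriv k g c - iteratedDeriv k f c) / k ! =
      (g d - ∑ k ∈ range (n + 1), (d - c) ^ k * iteratedDeriv k g c / k !) -
        (f d - ∑ k ∈ range (n + 1), (d - c) ^ k * iteratedDeriv k f c / k !) := by
    simp only [mul_sub, sub_div, Finset.sum_sub_distrib]
    ring
  rw [hsplit, add_mul, add_div]
  exact (abs_sub _ _).trans (add_le_add (abs_sub_sum_taylor_le hU hg hcd hN)
    (abs_sub_sum_taylor_le hU hf hcd hM))

theorem abs_deriv_midpoint_sub_slope_le {f : ℝ → ℝ} {U : Set ℝ} (hU : IsOpen U)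
    (hf : ContDiffOn ℝ 3 f U) {c d M : ℝ} (hcd : c < d) (hsub : Icc c d ⊆ U)
    (hM : ∀ y ∈ Icc c d, |iteratedDeriv 3 f y| ≤ M) :
    |deriv f ((c + d) / 2) - (f d - f c) / (d - c)| ≤ M / 24 * (d - c) ^ 2 := by
  have hm : (c + d) / 2 ∈ Icc c d := ⟨by linarith, by linarith⟩
  have hmc : uIcc ((c + d) / 2) c ⊆ Icc c d := uIcc_subset_Icc hm (left_mem_Icc.2 hcd.le)
  have hmd : uIcc ((c + d) / 2) d ⊆ Icc c d := uIcc_subset_Icc hm (right_mem_Icc.2 hcd.le)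
  have hRc := abs_sub_sum_taylor_le (n := 2) hU hf (hmc.trans hsub) fun y hy => hM y (hmc hy)
  have hRd := abs_sub_sum_taylor_le (n := 2) hU hf (hmd.trans hsub) fun y hy => hM y (hmd hy)
  set Rc := f c -
    ∑ k ∈ range (2 + 1), (c - (c + d) / 2) ^ k * iteratedDeriv k f ((c + d) / 2) / (k ! : ℝ)
  set Rd := f d -
    ∑ k ∈ range (2 + 1), (d - (c + d) / 2) ^ k * iteratedDeriv k f ((c + d) / 2) / (k ! : ℝ)
  have hdc : 0 < d - c := sub_pos.2 hcd
  have hdiff : deriv f ((c + d) / 2) - (f d - f c) / (d - c) = (Rc - Rd) / (d - c) := by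
    simp only [Rc, Rd, Finset.sum_range_succ, Finset.sum_range_zero, iteratedDeriv_zero,
      iteratedDeriv_one]
    field_simp
    ring
  have hc : |c - (c + d) / 2| = (d - c) / 2 := by
    rw [abs_sub_comm, abs_of_pos (by linarith)]; ring
  have hd : |d - (c + d) / 2| = (d - c) / 2 := by
    rw [abs_of_pos (by linarith)]; ring
  rw [hdiff, abs_div, abs_of_pos hdc, div_le_iff₀ hdc]
  calc |Rc - Rd| ≤ |Rc| + |Rd| := abs_sub _ _
    _ ≤ _ := add_le_add hRc hRd
    _ = M / 24 * (d - c) ^ 2 * (d - c) := by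
      rw [hc, hd]; norm_num [Nat.factorial]; ring

/-- Taylor-series correction formula for the first-derivative finite-difference
stencil of the immersed interface method: for a field equal to `ψ⁻` left of the
interface point `x∘` and `ψ⁺` right of it, the two-point difference quotient
corrected by the jumps `J_m = [[ψ^(m)]]` (for `m = 0, 1, 2`) approximates the
one-sided derivative `(ψ⁻)'` at the stencil midpoint to second order in `h`. -/
theorem iim_first_derivative_correction
    (h xi x1 : ℝ) (hh : 0 < h) (hx1 : x1 = xi + h)
    (xo : ℝ) (hxo : xo ∈ Set.Ioo xi x1)
    (a b : ℝ) (hsub : Set.Icc xi x1 ⊆ Set.Ioo a b)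
    (ψm ψp : ℝ → ℝ)
    (hψm : ContDiffOn ℝ 3 ψm (Set.Ioo a b))
    (hψp : ContDiffOn ℝ 3 ψp (Set.Ioo a b))
    (Mm Mp : ℝ)
    (hMm : ∀ x ∈ Set.Icc xi x1, |iteratedDeriv 3 ψm x| ≤ Mm)
    (hMp : ∀ x ∈ Set.Icc xi x1, |iteratedDeriv 3 ψp x| ≤ Mp) :
    |deriv ψm ((xi + x1) / 2)
        - (1 / h) * (ψp x1 - ψm xi
            - ∑ m ∈ Finset.range 3,
                (x1 - xo) ^ m
                  * (iteratedDeriv m ψp xo - iteratedDeriv m ψm xo)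
                  / (Nat.factorial m : ℝ))|
      ≤ (Mm / 24 + (Mp + Mm) / 6) * h ^ 2 := by
  have hwidth : x1 - xi = h := by linarith
  have hstencil := abs_deriv_midpoint_sub_slope_le isOpen_Ioo hψm (by linarith) hsub hMm
  have hI : uIcc xo x1 ⊆ Icc xi x1 :=
    uIcc_subset_Icc (Ioo_subset_Icc_self hxo) (right_mem_Icc.2 (by linarith))
  have hjump := abs_sub_sub_sum_taylor_jump_le (n := 2) isOpen_Ioo hψm hψp (hI.trans hsub)
    (fun y hy => hMm y (hI hy)) (fun y hy => hMp y (hI hy))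
  have hdist : |x1 - xo| ≤ h := by rw [abs_of_pos (by linarith [hxo.2])]; linarith [hxo.1]
  set A := deriv ψm ((xi + x1) / 2) - (ψm x1 - ψm xi) / (x1 - xi)
  set B := ψp x1 - ψm x1 - ∑ k ∈ range (2 + 1),
    (x1 - xo) ^ k * (iteratedDeriv k ψp xo - iteratedDeriv k ψm xo) / (k ! : ℝ)
  have hxi : xi ∈ Icc xi x1 := left_mem_Icc.2 (by linarith)
  have hM : 0 ≤ Mp + Mm :=
    add_nonneg ((abs_nonneg _).trans (hMp xi hxi)) ((abs_nonneg _).trans (hMm xi hxi))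
  have hB : |B| ≤ (Mp + Mm) / 6 * h ^ 2 * h := calc
    |B| ≤ (Mp + Mm) * |x1 - xo| ^ (2 + 1) / (2 + 1)! := hjump
    _ ≤ (Mp + Mm) * h ^ 3 / 6 := by norm_num [Nat.factorial]; gcongr
    _ = (Mp + Mm) / 6 * h ^ 2 * h := by ring
  rw [hwidth] at hstencil
  calc _ = |A - B / h| := by congr 1; simp only [A, B, hwidth]; field_simp; ring
    _ ≤ |A| + |B| / h := (abs_sub A (B / h)).trans_eq (by rw [abs_div, abs_of_pos hh])
    _ ≤ Mm / 24 * h ^ 2 + (Mp + Mm) / 6 * h ^ 2 := add_le_add hstencil ((div_le_iff₀ hh).2 hB)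
    _ = _ := by ring
end

section
/- Let h > 0, let x_i ∈ ℝ, x_{i−1} = x_i − h, x_{i+1} = x_i + h, and let x∘ ∈ (x_i, x_{i+1}). Let ψ⁻ and ψ⁺ be four-times continuously differentiable real functions on an open interval containing [x_{i−1}, x_{i+1}], and let M⁻ and M⁺ bound |(ψ⁻)''''| and |(ψ⁺)''''| on [x_{i−1}, x_{i+1}]. Define the jump values J_m = (ψ⁺)^{(m)}(x∘) − (ψ⁻)^{(m)}(x∘) for m = 0, 1, 2, 3, and set d⁺ = x_{i+1} − x∘. Then | (ψ⁻)''(x_i) − (1/h²) ( ψ⁻(x_{i−1}) − 2 ψ⁻(x_i) + ψ⁺(x_{i+1}) − Σ_{m=0}^{3} (d⁺)^m J_m / m! ) | ≤ (M⁻/12 + (M⁺ + M⁻)/24) h². -/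
/-!
Expand `ψ⁻` to third order about `xᵢ` at `xᵢ ± h`, and both `ψ⁺` and `ψ⁻` about `x∘` at `xᵢ₊₁`.
The jump terms turn `ψ⁺(xᵢ₊₁)` into `ψ⁻(xᵢ₊₁)` up to the two remainders about `x∘`, so the
corrected stencil is the ordinary stencil of `ψ⁻`, i.e. `(ψ⁻)''(xᵢ)` up to four Lagrange remainders
divided by `h²`. Each remainder is at most `M h⁴ / 24`, because `|xᵢ₊₁ - x∘| ≤ h`.
-/

open Set Nat

theorem taylorWithinEval_eq_univ {f : ℝ → ℝ} {n : ℕ} {s : Set ℝ} {x₀ : ℝ}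
    (hs : UniqueDiffOn ℝ s) (hx₀ : x₀ ∈ s) (hf : ContDiffAt ℝ n f x₀) :
    taylorWithinEval f n s x₀ = taylorWithinEval f n univ x₀ := by
  ext x
  simp only [taylor_within_apply, iteratedDerivWithin_univ]
  refine Finset.sum_congr rfl fun k hk => ?_
  have hkn : (k : WithTop ℕ∞) ≤ n := by exact_mod_cast Nat.lt_succ_iff.mp (Finset.mem_range.mp hk)
  rw [iteratedDerivWithin_eq_iteratedDeriv hs (hf.of_le hkn) hx₀]

theorem abs_sub_taylorWithinEval_univ_le {f : ℝ → ℝ} {n : ℕ} {x₀ x M : ℝ}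
    (hf : ∀ y ∈ uIcc x₀ x, ContDiffAt ℝ (n + 1) f y)
    (hM : ∀ y ∈ uIcc x₀ x, |iteratedDeriv (n + 1) f y| ≤ M) :
    |f x - taylorWithinEval f n univ x₀ x| ≤ M * |x - x₀| ^ (n + 1) / (n + 1)! := by
  rcases eq_or_ne x₀ x with rfl | hne
  · simp
  have hf' : ContDiffOn ℝ (n + 1) f (uIcc x₀ x) := fun y hy => (hf y hy).contDiffWithinAt
  obtain ⟨y, hy, hrem⟩ := taylor_mean_remainder_lagrange_iteratedDeriv hne hf'
  rw [← taylorWithinEval_eq_univ (uniqueDiffOn_uIcc hne) left_mem_uIcc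
    ((hf x₀ left_mem_uIcc).of_le (by norm_cast; omega)), hrem, abs_div, abs_mul, abs_pow,
    Nat.abs_cast]
  gcongr
  exact hM y (uIoo_subset_uIcc_self hy)

theorem abs_sub_taylorWithinEval_univ_le_of_mem_Icc {f : ℝ → ℝ} {n : ℕ} {u v x₀ x h M : ℝ}
    (hf : ∀ y ∈ Icc u v, ContDiffAt ℝ (n + 1) f y)
    (hM : ∀ y ∈ Icc u v, |iteratedDeriv (n + 1) f y| ≤ M)
    (hx₀ : x₀ ∈ Icc u v) (hx : x ∈ Icc u v) (hxh : |x - x₀| ≤ h) :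
    |f x - taylorWithinEval f n univ x₀ x| ≤ M * h ^ (n + 1) / (n + 1)! := by
  have hsub : uIcc x₀ x ⊆ Icc u v := uIcc_subset_Icc hx₀ hx
  have hM₀ : 0 ≤ M := (abs_nonneg _).trans (hM x₀ hx₀)
  calc |f x - taylorWithinEval f n univ x₀ x|
      ≤ M * |x - x₀| ^ (n + 1) / (n + 1)! :=
        abs_sub_taylorWithinEval_univ_le (fun y hy => hf y (hsub hy)) fun y hy => hM y (hsub hy)
    _ ≤ M * h ^ (n + 1) / (n + 1)! := by gcongr

theorem corrected_stencil_eq {ψm ψp : ℝ → ℝ} {h xi xo : ℝ} (hh : h ≠ 0) :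
    iteratedDeriv 2 ψm xi
        - (1 / h ^ 2) * (ψm (xi - h) - 2 * ψm xi + ψp (xi + h)
            - ∑ m ∈ Finset.range 4,
                (xi + h - xo) ^ m
                  * (iteratedDeriv m ψp xo - iteratedDeriv m ψm xo)
                  / (Nat.factorial m : ℝ))
      = -((ψm (xi - h) - taylorWithinEval ψm 3 univ xi (xi - h))
          + (ψm (xi + h) - taylorWithinEval ψm 3 univ xi (xi + h))
          + (ψp (xi + h) - taylorWithinEval ψp 3 univ xo (xi + h))
          - (ψm (xi + h) - taylorWithinEval ψm 3 univ xo (xi + h))) / h ^ 2 := by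
  simp only [taylor_within_apply, iteratedDerivWithin_univ, Finset.sum_range_succ,
    Finset.sum_range_zero, Nat.factorial, iteratedDeriv_zero, smul_eq_mul]
  push_cast
  field_simp
  ring

/-- Taylor-series correction formula for the second-derivative finite-difference
stencil of the immersed interface method: for a field equal to `ψ⁻` left of the
interface point `x∘` and `ψ⁺` right of it, the three-point centered second
difference corrected by the jumps `J_m = [[ψ^(m)]]` (for `m = 0, 1, 2, 3`)
approximates the one-sided second derivative `(ψ⁻)''` at the center node to
second order in `h`. -/
theorem iim_second_derivative_correction
    (h xi xm1 x1 : ℝ) (hh : 0 < h) (hxm1 : xm1 = xi - h) (hx1 : x1 = xi + h)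
    (xo : ℝ) (hxo : xo ∈ Set.Ioo xi x1)
    (a b : ℝ) (hsub : Set.Icc xm1 x1 ⊆ Set.Ioo a b)
    (ψm ψp : ℝ → ℝ)
    (hψm : ContDiffOn ℝ 4 ψm (Set.Ioo a b))
    (hψp : ContDiffOn ℝ 4 ψp (Set.Ioo a b))
    (Mm Mp : ℝ)
    (hMm : ∀ x ∈ Set.Icc xm1 x1, |iteratedDeriv 4 ψm x| ≤ Mm)
    (hMp : ∀ x ∈ Set.Icc xm1 x1, |iteratedDeriv 4 ψp x| ≤ Mp) :
    |iteratedDeriv 2 ψm xi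
        - (1 / h ^ 2) * (ψm xm1 - 2 * ψm xi + ψp x1
            - ∑ m ∈ Finset.range 4,
                (x1 - xo) ^ m
                  * (iteratedDeriv m ψp xo - iteratedDeriv m ψm xo)
                  / (Nat.factorial m : ℝ))|
      ≤ (Mm / 12 + (Mp + Mm) / 24) * h ^ 2 := by
  subst hxm1 hx1
  obtain ⟨hxi_lt_xo, hxo_lt_x1⟩ := hxo
  have hsmooth {f : ℝ → ℝ} (hf : ContDiffOn ℝ 4 f (Ioo a b)) :
      ∀ y ∈ Icc (xi - h) (xi + h), ContDiffAt ℝ (3 + 1) f y :=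
    fun y hy => hf.contDiffAt (isOpen_Ioo.mem_nhds (hsub hy))
  have hxi : xi ∈ Icc (xi - h) (xi + h) := ⟨by linarith, by linarith⟩
  have hxm1 : xi - h ∈ Icc (xi - h) (xi + h) := ⟨le_rfl, by linarith⟩
  have hx1 : xi + h ∈ Icc (xi - h) (xi + h) := ⟨by linarith, le_rfl⟩
  have hxo' : xo ∈ Icc (xi - h) (xi + h) := ⟨by linarith, hxo_lt_x1.le⟩
  have hdist : |xi + h - xo| ≤ h := by rw [abs_le]; constructor <;> linarith
  have hleft : |xi - h - xi| ≤ h := by rw [sub_sub_cancel_left, abs_neg, abs_of_pos hh]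
  have hright : |xi + h - xi| ≤ h := by rw [add_sub_cancel_left, abs_of_pos hh]
  have hA := abs_sub_taylorWithinEval_univ_le_of_mem_Icc (hsmooth hψm) hMm hxi hxm1 hleft
  have hB := abs_sub_taylorWithinEval_univ_le_of_mem_Icc (hsmooth hψm) hMm hxi hx1 hright
  have hC := abs_sub_taylorWithinEval_univ_le_of_mem_Icc (hsmooth hψp) hMp hxo' hx1 hdist
  have hD := abs_sub_taylorWithinEval_univ_le_of_mem_Icc (hsmooth hψm) hMm hxo' hx1 hdist
  rw [corrected_stencil_eq hh.ne', abs_div, abs_neg, abs_of_pos (pow_pos hh 2),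
    div_le_iff₀ (pow_pos hh 2)]
  have h24 : (((3 + 1)! : ℕ) : ℝ) = 24 := by norm_num [Nat.factorial]
  rw [h24] at hA hB hC hD
  refine ((abs_sub _ _).trans (add_le_add_left (abs_add_three _ _ _) _)).trans ?_
  linarith
end
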